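/- arXiv:1506.06671 — 4 statements merged into one kernel-verified Lean document; each statement's English description precedes it below -/
import Mathlib

section
/- For every i ∈ {0,1,2,3}, the estimator X_i is unbiased: E[X_i] = n_i, where the expectation is over the random edge sampling. -/
open Finset

noncomputable section
open scoped Classical

namespace ThreeProfile

variable {V : Type*}

/-- Edges of an edge set `F` whose endpoints both lie in the vertex set `s`. -/
def edgesIn (F : Finset (Sym2 V)) (s : Finset V) : Finset (Sym2 V) :=
  F.filter (fun e => ∀ x ∈ e, x ∈ s)

/-- All 3-element subsets of the vertex set. -/
def triples (V : Type*) [Fintype V] : Finset (Finset V) :=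
  (Finset.univ : Finset V).powersetCard 3

/-- Number of 3-subsets of `V` inducing exactly `i` edges from `F`. -/
def Ycount [Fintype V] (F : Finset (Sym2 V)) (i : ℕ) : ℕ :=
  ((triples V).filter (fun s => (edgesIn F s).card = i)).card

/-- Expectation over the random subgraph keeping each edge independently w.p. `p`. -/
def expVal [Fintype V] (G : SimpleGraph V) (p : ℝ) (f : Finset (Sym2 V) → ℝ) : ℝ :=
  ∑ F ∈ G.edgeFinset.powerset,
    p ^ F.card * (1 - p) ^ (G.edgeFinset.card - F.card) * f F

/-- The unbiased estimators of the 3-profile. -/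
def Xest [Fintype V] (p : ℝ) (i : ℕ) (F : Finset (Sym2 V)) : ℝ :=
  match i with
  | 0 => (Ycount F 0 : ℝ) - (1 - p) * Ycount F 1 / p + (1 - p) ^ 2 * Ycount F 2 / p ^ 2
           - (1 - p) ^ 3 * Ycount F 3 / p ^ 3
  | 1 => (Ycount F 1 : ℝ) / p - 2 * (1 - p) * Ycount F 2 / p ^ 2
           + 3 * (1 - p) ^ 2 * Ycount F 3 / p ^ 3
  | 2 => (Ycount F 2 : ℝ) / p ^ 2 - 3 * (1 - p) * Ycount F 3 / p ^ 3
  | 3 => (Ycount F 3 : ℝ) / p ^ 3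
  | _ => 0

/-!
Fix a triple `s` of vertices spanning `k` edges of `G`. Summing out the edges outside `s`, the
number of sampled edges inside `s` equals `j` with probability `C(k,j) p^j (1-p)^(k-j)`, so
`E[Y_j] = ∑_s C(k_s,j) p^j (1-p)^(k_s-j)`. The estimators are `X_i = ∑_j c_ij Y_j` with
`c_ij = (-1)^(j-i) C(j,i) (1-p)^(j-i) / p^j`, the inverse of this binomial matrix: since
`C(k,j) C(j,i) = C(k,i) C(k-i,j-i)`, the binomial theorem gives
`∑_j C(k,j) p^j (1-p)^(k-j) c_ij = C(k,i) ((1-p) - (1-p))^(k-i) = [k = i]`.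
Summing over triples, `E[X_i] = n_i`.
-/

section
variable {R : Type*} [CommRing R] {α : Type*}

theorem sum_powerset_pow_mul_pow_inter [DecidableEq α] (p : R) {A E : Finset α} (hAE : A ⊆ E)
    (g : Finset α → R) :
    ∑ F ∈ E.powerset, p ^ #F * (1 - p) ^ (#E - #F) * g (F ∩ A)
      = ∑ B ∈ A.powerset, p ^ #B * (1 - p) ^ (#A - #B) * g B := by
  obtain ⟨D, hDA, rfl⟩ : ∃ D, Disjoint D A ∧ E = D ∪ A :=
    ⟨E \ A, sdiff_disjoint, (sdiff_union_of_subset hAE).symm⟩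
  clear hAE
  induction D using Finset.induction_on with
  | empty =>
    rw [empty_union]
    exact sum_congr rfl fun B hB => by rw [inter_eq_left.2 (mem_powerset.1 hB)]
  | @insert x D hxD ih =>
    have hx : x ∉ D ∪ A := by
      simpa [hxD] using disjoint_left.1 hDA (mem_insert_self x D)
    rw [insert_union, sum_powerset_insert hx,
      ← ih (disjoint_of_subset_left (subset_insert x D) hDA), ← sum_add_distrib]
    refine sum_congr rfl fun F hF => ?_
    have hxF : x ∉ F := fun h => hx (mem_powerset.1 hF h)
    have hFE : #F ≤ #(D ∪ A) := card_le_card (mem_powerset.1 hF)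
    rw [card_insert_of_notMem hx, card_insert_of_notMem hxF,
      insert_inter_of_notMem fun h => hx (mem_union_right D h), Nat.succ_sub_succ,
      Nat.sub_add_comm hFE]
    ring

theorem sum_powerset_pow_mul_pow_ite_card (p : R) (A : Finset α) (j : ℕ) :
    ∑ B ∈ A.powerset, p ^ #B * (1 - p) ^ (#A - #B) * (if #B = j then 1 else 0)
      = (#A).choose j * p ^ j * (1 - p) ^ (#A - j) := by
  simp only [mul_ite, mul_one, mul_zero, ← sum_filter, ← powersetCard_eq_filter]
  rw [sum_congr rfl fun B hB => by rw [(mem_powersetCard.1 hB).2], sum_const, card_powersetCard,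
    nsmul_eq_mul, mul_assoc]

end

section
variable {K : Type*} [Field K]

def binomialInverseCoeff (p : K) (i j : ℕ) : K :=
  (-1) ^ (j - i) * j.choose i * (1 - p) ^ (j - i) / p ^ j

theorem sum_choose_mul_binomialInverseCoeff {p : K} (hp : p ≠ 0) {N k : ℕ} (hk : k < N)
    (i : ℕ) :
    ∑ j ∈ range N, k.choose j * p ^ j * (1 - p) ^ (k - j) * binomialInverseCoeff p i j
      = if k = i then 1 else 0 := by
  rw [← sum_subset (range_subset_range.2 hk) fun j _ hj => by
    rw [Nat.choose_eq_zero_of_lt (by simpa using hj)]; simp]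
  obtain hki | hik := lt_or_ge k i
  · rw [if_neg hki.ne]
    refine sum_eq_zero fun j hj => ?_
    rw [binomialInverseCoeff, Nat.choose_eq_zero_of_lt ((mem_range_succ_iff.1 hj).trans_lt hki)]
    simp
  obtain ⟨n, rfl⟩ := Nat.exists_eq_add_of_le hik
  have hlow : ∀ j ∈ range i, (i + n).choose j * p ^ j * (1 - p) ^ (i + n - j)
      * binomialInverseCoeff p i j = 0 := fun j hj => by
    rw [binomialInverseCoeff, Nat.choose_eq_zero_of_lt (mem_range.1 hj)]; simp
  have hhigh : ∀ l ∈ range (n + 1), (i + n).choose (i + l) * p ^ (i + l)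
      * (1 - p) ^ (i + n - (i + l)) * binomialInverseCoeff p i (i + l)
      = (i + n).choose i * ((-(1 - p)) ^ l * (1 - p) ^ (n - l) * n.choose l) := fun l _ => by
    have hchoose := Nat.choose_mul (n := i + n) (Nat.le_add_right i l)
    simp only [Nat.add_sub_cancel_left] at hchoose
    rw [binomialInverseCoeff, Nat.add_sub_add_left, Nat.add_sub_cancel_left, neg_pow (1 - p)]
    calc _ = ((i + n).choose (i + l) * (i + l).choose i : ℕ)
          * ((-1) ^ l * (1 - p) ^ l * (1 - p) ^ (n - l)) * (p ^ (i + l) / p ^ (i + l)) := by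
          push_cast; ring
      _ = _ := by rw [hchoose, div_self (pow_ne_zero _ hp)]; push_cast; ring
  rw [show (i + n).succ = i + (n + 1) from rfl, sum_range_add, sum_eq_zero hlow, zero_add,
    sum_congr rfl hhigh, ← mul_sum, ← add_pow, neg_add_cancel, zero_pow_eq]
  by_cases hn : n = 0 <;> simp [hn]

end

theorem edgesIn_eq_inter_of_subset {E F : Finset (Sym2 V)} (hFE : F ⊆ E) (s : Finset V) :
    edgesIn F s = F ∩ edgesIn E s := by
  ext e
  simp only [edgesIn, mem_filter, mem_inter]
  exact ⟨fun h => ⟨h.1, hFE h.1, h.2⟩, fun h => ⟨h.1, h.2.2⟩⟩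

variable [Fintype V]

theorem card_edgesIn_le_choose_two (G : SimpleGraph V) (s : Finset V) :
    #(edgesIn G.edgeFinset s) ≤ (#s).choose 2 := by
  rw [← Sym2.card_image_offDiag]
  refine card_le_card fun e he => ?_
  induction e using Sym2.ind with
  | h a b =>
    simp only [edgesIn, mem_filter, SimpleGraph.mem_edgeFinset,
      Sym2.mem_iff, forall_eq_or_imp, forall_eq] at he
    exact mem_image.2 ⟨(a, b), mem_offDiag.2 ⟨he.2.1, he.2.2, he.1.ne⟩, rfl⟩

theorem expVal_sum_mul (G : SimpleGraph V) (p : ℝ) {ι : Type*} (t : Finset ι) (c : ι → ℝ)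
    (f : ι → Finset (Sym2 V) → ℝ) :
    expVal G p (fun F => ∑ j ∈ t, c j * f j F) = ∑ j ∈ t, c j * expVal G p (f j) := by
  simp only [expVal, mul_sum]
  rw [sum_comm]
  exact sum_congr rfl fun j _ => sum_congr rfl fun F _ => by ring

theorem expVal_Ycount (G : SimpleGraph V) (p : ℝ) (j : ℕ) :
    expVal G p (fun F => Ycount F j) = ∑ s ∈ triples V,
      (#(edgesIn G.edgeFinset s)).choose j * p ^ j * (1 - p) ^ (#(edgesIn G.edgeFinset s) - j) := by
  simp only [expVal, Ycount, natCast_card_filter, mul_sum]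
  rw [sum_comm]
  refine sum_congr rfl fun s _ => ?_
  have hA : edgesIn G.edgeFinset s ⊆ G.edgeFinset := fun e he => by
    simp only [edgesIn, mem_filter] at he
    exact he.1
  rw [← sum_powerset_pow_mul_pow_ite_card, ← sum_powerset_pow_mul_pow_inter p hA]
  exact sum_congr rfl fun F hF => by
    rw [edgesIn_eq_inter_of_subset (mem_powerset.1 hF)]

theorem Xest_eq_sum (p : ℝ) {i : ℕ} (hi : i ≤ 3) :
    Xest p i = fun F : Finset (Sym2 V) =>
      ∑ j ∈ range 4, binomialInverseCoeff p i j * Ycount F j := by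
  funext F
  interval_cases i <;> simp [Xest, binomialInverseCoeff, sum_range_succ, Nat.choose] <;> ring

theorem unbiased_estimator_general {V : Type*} [Fintype V] (G : SimpleGraph V)
    (p : ℝ) (hp : 0 < p) :
    ∀ i ≤ 3, expVal G p (Xest p i) = (Ycount G.edgeFinset i : ℝ) := by
  intro i hi
  have hcard : ∀ s ∈ triples V, #(edgesIn G.edgeFinset s) < 4 := fun s hs => by
    have h := card_edgesIn_le_choose_two G s
    rw [(mem_powersetCard.1 hs).2] at h
    exact Nat.lt_succ_of_le h
  calc expVal G p (Xest p i)
      = ∑ j ∈ range 4, binomialInverseCoeff p i j * expVal G p (fun F => Ycount F j) := by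
        rw [Xest_eq_sum p hi, expVal_sum_mul]
    _ = ∑ s ∈ triples V, ∑ j ∈ range 4, (#(edgesIn G.edgeFinset s)).choose j * p ^ j
          * (1 - p) ^ (#(edgesIn G.edgeFinset s) - j) * binomialInverseCoeff p i j := by
        simp_rw [expVal_Ycount, mul_sum]
        rw [sum_comm]
        exact sum_congr rfl fun s _ => sum_congr rfl fun j _ => mul_comm _ _
    _ = ∑ s ∈ triples V, if #(edgesIn G.edgeFinset s) = i then 1 else 0 :=
        sum_congr rfl fun s hs => sum_choose_mul_binomialInverseCoeff hp.ne' (hcard s hs) i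
    _ = Ycount G.edgeFinset i := (natCast_card_filter _ _).symm

theorem unbiased_estimator {V : Type*} [Fintype V] (G : SimpleGraph V)
    (p : ℝ) (hp : 0 < p) (hp1 : p ≤ 1) :
    ∀ i ≤ 3, expVal G p (Xest p i) = (Ycount G.edgeFinset i : ℝ) :=
  unbiased_estimator_general G p hp

end ThreeProfile
end
end

section
/- Assume G has at least one edge and 0 ≤ p ≤ 1. The polynomial Y_3(t) = Σ_{triangles {e,f,g}} t_e·t_f·t_g in the variables (t_e)_{e∈E} (the sum ranging over all triangles of G with edge sets {e,f,g}) is totally positive; moreover, when the variables t_e are evaluated at independent Bernoulli(p) random variables, E_{≥1}[Y_3] ≤ max{1, p^2·Δ}. -/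
open Finset MvPolynomial

noncomputable section
open scoped Classical

namespace ThreeProfile

variable {V : Type*}

/-- 3-subsets of `V` inducing exactly `i` edges of `G`. -/
def triplesWith [Fintype V] (G : SimpleGraph V) (i : ℕ) : Finset (Finset V) :=
  (triples V).filter (fun s => (edgesIn G.edgeFinset s).card = i)

/-- A polynomial (in variables indexed by `Sym2 V`) is totally positive if all of its
monomial coefficients are nonnegative. -/
def TotallyPositive (f : MvPolynomial (Sym2 V) ℝ) : Prop :=
  ∀ m : Sym2 V →₀ ℕ, 0 ≤ f.coeff m

/-- Iterated partial derivative `∂^a f` for a multi-index `a`. -/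
def iterDeriv (a : Sym2 V →₀ ℕ) (f : MvPolynomial (Sym2 V) ℝ) :
    MvPolynomial (Sym2 V) ℝ :=
  a.support.toList.foldr (fun i g => (fun h => MvPolynomial.pderiv i h)^[a i] g) f

/-- Expectation of a polynomial when the variables are evaluated at independent
Bernoulli(`q`) random variables. -/
def bernoulliExp [Fintype V] (q : ℝ) (f : MvPolynomial (Sym2 V) ℝ) : ℝ :=
  ∑ S ∈ (Finset.univ : Finset (Sym2 V)).powerset,
    q ^ S.card * (1 - q) ^ (Fintype.card (Sym2 V) - S.card) *
      MvPolynomial.eval (fun e => if e ∈ S then (1 : ℝ) else 0) f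

/-- Number of triangles of `G` containing the edge `e`. -/
def deltaE [Fintype V] (G : SimpleGraph V) (e : Sym2 V) : ℕ :=
  ((triples V).filter
    (fun s => (edgesIn G.edgeFinset s).card = 3 ∧ e ∈ edgesIn G.edgeFinset s)).card

/-- The polynomial `Y₃(t) = Σ_{triangles {e,f,g}} t_e t_f t_g`. -/
def Y3poly [Fintype V] (G : SimpleGraph V) : MvPolynomial (Sym2 V) ℝ :=
  ∑ s ∈ triplesWith G 3, ∏ e ∈ edgesIn G.edgeFinset s, X e

/-!
Every monomial of `Y₃ = ∑ₛ ∏_{e ∈ E(s)} t_e` (sum over triangles `s`) is squarefree with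
coefficient `1`, so `Y₃` is totally positive and `∂^a Y₃` vanishes unless `a` is the indicator
of a set `U` of edges; then it is the sum of `∏_{e ∈ E(s) \ U} t_e` over the triangles `s` with
`U ⊆ E(s)`, and each summand has Bernoulli(`p`) expectation `p ^ (3 - |U|)`. For `U = {e}` there
are `Δ_e ≤ Δ` such triangles, giving `p²Δ`. For `|U| ≥ 2`, two distinct edges already span three
vertices, so at most one triangle qualifies and the expectation is at most `1`.
-/

section PartialDerivatives

variable {σ R : Type*} [DecidableEq σ] [CommSemiring R]

theorem pderiv_prod_X_of_notMem {i : σ} {T : Finset σ} (hi : i ∉ T) :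
    pderiv i (∏ e ∈ T, X e : MvPolynomial σ R) = 0 := by
  induction T using Finset.induction_on with
  | empty => simp
  | insert j T hj ih =>
    rw [prod_insert hj, pderiv_mul, pderiv_X_of_ne (ne_of_mem_of_not_mem (mem_insert_self j T) hi),
      ih (fun h => hi (mem_insert_of_mem h))]
    simp

theorem pderiv_prod_X (i : σ) (T : Finset σ) :
    pderiv i (∏ e ∈ T, X e : MvPolynomial σ R) =
      if i ∈ T then ∏ e ∈ T.erase i, X e else 0 := by
  split_ifs with hi
  · rw [← mul_prod_erase T _ hi, pderiv_mul, pderiv_X_self,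
      pderiv_prod_X_of_notMem (notMem_erase i T)]
    simp
  · exact pderiv_prod_X_of_notMem hi

theorem iterate_pderiv_prod_X {i : σ} {k : ℕ} (hk : k ≠ 0) (T : Finset σ) :
    (pderiv i)^[k] (∏ e ∈ T, X e : MvPolynomial σ R) =
      if k = 1 ∧ i ∈ T then ∏ e ∈ T.erase i, X e else 0 := by
  obtain ⟨k, rfl⟩ := Nat.exists_eq_succ_of_ne_zero hk
  rw [Function.iterate_succ_apply, pderiv_prod_X]
  by_cases hi : i ∈ T
  · rcases k with _ | k
    · simp [hi]
    · rw [if_pos hi, Function.iterate_succ_apply, pderiv_prod_X_of_notMem (notMem_erase i T),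
        iterate_map_zero]
      simp
  · simp [hi, iterate_map_zero]

theorem foldr_iterate_pderiv_prod_X (a : σ →₀ ℕ) {L : List σ} (hL : L.Nodup)
    (ha : ∀ i ∈ L, a i ≠ 0) (T : Finset σ) :
    L.foldr (fun i f => (pderiv i)^[a i] f) (∏ e ∈ T, X e : MvPolynomial σ R) =
      if ∀ i ∈ L, a i = 1 ∧ i ∈ T then ∏ e ∈ T \ L.toFinset, X e else 0 := by
  induction L with
  | nil => simp
  | cons i L ih =>
    obtain ⟨hiL, hL⟩ := List.nodup_cons.mp hL
    rw [List.foldr_cons, ih hL (fun j hj => ha j (List.mem_cons_of_mem i hj))]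
    by_cases hc : ∀ j ∈ L, a j = 1 ∧ j ∈ T
    · have hdiff : (T \ L.toFinset).erase i = T \ (i :: L).toFinset := by
        ext j
        simp only [mem_erase, mem_sdiff, List.mem_toFinset, List.mem_cons]
        tauto
      rw [if_pos hc, iterate_pderiv_prod_X (ha i List.mem_cons_self), hdiff]
      refine if_congr ?_ rfl rfl
      simp only [List.forall_mem_cons, mem_sdiff, List.mem_toFinset, hiL, not_false_eq_true,
        and_true]
      exact (and_iff_left hc).symm
    · rw [if_neg hc, iterate_map_zero,
        if_neg fun h => hc fun j hj => h j (List.mem_cons_of_mem i hj)]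

end PartialDerivatives

theorem sum_powerset_filter_superset_pow_mul_one_sub_pow {α R : Type*} [Fintype α] [CommRing R]
    (q : R) (U : Finset α) :
    ∑ S ∈ (univ : Finset α).powerset with U ⊆ S, q ^ #S * (1 - q) ^ (Fintype.card α - #S) =
      q ^ #U :=
  calc _ = ∑ S ∈ (univ : Finset α).powerset,
        (∏ _e ∈ S, q) * ∏ e ∈ univ \ S, (if e ∉ U then 1 - q else 0) := by
        rw [sum_filter]
        refine sum_congr rfl fun S _ => ?_
        rw [prod_const, prod_ite_zero, prod_const, card_univ_sdiff]
        simp only [mem_sdiff, mem_univ, true_and, not_imp_not, ← subset_iff]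
        split_ifs <;> simp
    _ = ∏ e, (q + if e ∉ U then 1 - q else 0) := (prod_add _ _ _).symm
    _ = q ^ #U := by
        rw [← prod_const, ← univ_inter U, ← prod_ite_mem]
        refine prod_congr rfl fun e _ => ?_
        split_ifs <;> simp_all

theorem exists_mem_notMem_of_ne {α : Type*} {e f : Sym2 α} (hf : ¬f.IsDiag) (hef : e ≠ f) :
    ∃ x ∈ f, x ∉ e := by
  induction f using Sym2.ind with | _ c d => ?_
  by_contra! h
  exact hef ((Sym2.mem_and_mem_iff (by simpa using hf)).mp
    ⟨h c (Sym2.mem_mk_left c d), h d (Sym2.mem_mk_right c d)⟩)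

theorem iterDeriv_sum (a : Sym2 V →₀ ℕ) {ι : Type*} (S : Finset ι)
    (f : ι → MvPolynomial (Sym2 V) ℝ) :
    iterDeriv a (∑ s ∈ S, f s) = ∑ s ∈ S, iterDeriv a (f s) := by
  unfold iterDeriv
  induction a.support.toList with
  | nil => rfl
  | cons i L ih =>
    have h := map_sum ((pderiv i : Derivation ℝ (MvPolynomial (Sym2 V) ℝ) _).toLinearMap ^ a i)
      (fun s => L.foldr (fun i g => (fun h => pderiv i h)^[a i] g) (f s)) S
    simp only [Module.End.coe_pow, Derivation.coeFn_coe] at h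
    simp only [List.foldr_cons, ih]
    exact h

theorem iterDeriv_prod_X (a : Sym2 V →₀ ℕ) (T : Finset (Sym2 V)) :
    iterDeriv a (∏ e ∈ T, X e) =
      if (∀ i ∈ a.support, a i = 1) ∧ a.support ⊆ T then ∏ e ∈ T \ a.support, X e else 0 := by
  rw [iterDeriv, foldr_iterate_pderiv_prod_X a (nodup_toList _)
    (fun i hi => Finsupp.mem_support_iff.mp (mem_toList.mp hi)), toList_toFinset]
  refine if_congr ?_ rfl rfl
  simp only [mem_toList, forall_and, subset_iff]

theorem mem_edgesIn {F : Finset (Sym2 V)} {s : Finset V} {e : Sym2 V} :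
    e ∈ edgesIn F s ↔ e ∈ F ∧ ∀ x ∈ e, x ∈ s := by
  simp only [edgesIn, mem_filter]

theorem totallyPositive_sum {ι : Type*} (S : Finset ι) {f : ι → MvPolynomial (Sym2 V) ℝ}
    (hf : ∀ i ∈ S, TotallyPositive (f i)) : TotallyPositive (∑ i ∈ S, f i) := fun m => by
  rw [coeff_sum]
  exact sum_nonneg fun i hi => hf i hi m

theorem totallyPositive_prod_X (T : Finset (Sym2 V)) :
    TotallyPositive (∏ e ∈ T, X e : MvPolynomial (Sym2 V) ℝ) := fun m => by
  have h : (∏ e ∈ T, X e : MvPolynomial (Sym2 V) ℝ) = monomial (∑ e ∈ T, Finsupp.single e 1) 1 :=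
    (monomial_sum_one T _).symm
  rw [h, coeff_monomial]
  split_ifs <;> norm_num

section Graph

variable [Fintype V]

theorem bernoulliExp_zero (q : ℝ) : bernoulliExp q (0 : MvPolynomial (Sym2 V) ℝ) = 0 := by
  simp [bernoulliExp]

theorem bernoulliExp_sum (q : ℝ) {ι : Type*} (S : Finset ι) (f : ι → MvPolynomial (Sym2 V) ℝ) :
    bernoulliExp q (∑ s ∈ S, f s) = ∑ s ∈ S, bernoulliExp q (f s) := by
  simp only [bernoulliExp, map_sum, mul_sum]
  exact sum_comm

theorem bernoulliExp_prod_X (q : ℝ) (U : Finset (Sym2 V)) :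
    bernoulliExp q (∏ e ∈ U, X e) = q ^ #U := by
  simp only [bernoulliExp, map_prod, eval_X, prod_boole, mul_ite, mul_one, mul_zero]
  rw [← sum_filter]
  convert sum_powerset_filter_superset_pow_mul_one_sub_pow q U using 3
  exact subset_iff.symm

variable (G : SimpleGraph V)

def trianglesContaining (U : Finset (Sym2 V)) : Finset (Finset V) :=
  {s ∈ triplesWith G 3 | U ⊆ edgesIn G.edgeFinset s}

theorem card_trianglesContaining_singleton (e : Sym2 V) :
    #(trianglesContaining G {e}) = deltaE G e := by
  simp only [trianglesContaining, triplesWith, filter_filter, deltaE, singleton_subset_iff]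

theorem deltaE_le_sup (e : Sym2 V) : deltaE G e ≤ G.edgeFinset.sup (deltaE G) := by
  by_cases he : e ∈ G.edgeFinset
  · exact le_sup he
  · have : deltaE G e = 0 := by
      rw [deltaE, card_eq_zero, filter_eq_empty_iff]
      exact fun s _ hs => he (mem_edgesIn.mp hs.2).1
    simp [this]

theorem mem_triplesWith {i : ℕ} {s : Finset V} :
    s ∈ triplesWith G i ↔ #s = 3 ∧ #(edgesIn G.edgeFinset s) = i := by
  simp [triplesWith, triples, mem_powersetCard]

theorem eq_of_mem_edgesIn_of_ne {s t : Finset V} (hs : #s = 3) (ht : #t = 3) {e f : Sym2 V}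
    (hef : e ≠ f) (hes : e ∈ edgesIn G.edgeFinset s) (hfs : f ∈ edgesIn G.edgeFinset s)
    (het : e ∈ edgesIn G.edgeFinset t) (hft : f ∈ edgesIn G.edgeFinset t) : s = t := by
  induction e using Sym2.ind with | _ a b => ?_
  have hab : G.Adj a b := SimpleGraph.mem_edgeFinset.mp (mem_edgesIn.mp hes).1
  obtain ⟨x, hxf, hxab⟩ := exists_mem_notMem_of_ne
    (G.not_isDiag_of_mem_edgeSet (SimpleGraph.mem_edgeFinset.mp (mem_edgesIn.mp hfs).1)) hef
  rw [Sym2.mem_iff, not_or] at hxab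
  have hcard : #({a, b, x} : Finset V) = 3 :=
    card_eq_three.mpr ⟨a, b, x, hab.ne, Ne.symm hxab.1, Ne.symm hxab.2, rfl⟩
  have key : ∀ u : Finset V, #u = 3 → s(a, b) ∈ edgesIn G.edgeFinset u →
      f ∈ edgesIn G.edgeFinset u → {a, b, x} = u := by
    intro u hu heu hfu
    refine eq_of_subset_of_card_le ?_ (by rw [hu, hcard])
    simp only [insert_subset_iff, singleton_subset_iff]
    exact ⟨(mem_edgesIn.mp heu).2 a (Sym2.mem_mk_left a b),
      (mem_edgesIn.mp heu).2 b (Sym2.mem_mk_right a b), (mem_edgesIn.mp hfu).2 x hxf⟩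
  rw [← key s hs hes hfs, key t ht het hft]

theorem card_trianglesContaining_le_one {U : Finset (Sym2 V)} (hU : 1 < #U) :
    #(trianglesContaining G U) ≤ 1 := by
  obtain ⟨e, he, f, hf, hef⟩ := one_lt_card.mp hU
  refine card_le_one.mpr fun s hs t ht => ?_
  simp only [trianglesContaining, mem_filter, mem_triplesWith] at hs ht
  exact eq_of_mem_edgesIn_of_ne G hs.1.1 ht.1.1 hef (hs.2 he) (hs.2 hf) (ht.2 he) (ht.2 hf)

theorem bernoulliExp_iterDeriv_Y3poly (q : ℝ) (a : Sym2 V →₀ ℕ) :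
    bernoulliExp q (iterDeriv a (Y3poly G)) =
      if ∀ i ∈ a.support, a i = 1 then
        #(trianglesContaining G a.support) * q ^ (3 - #a.support) else 0 := by
  rw [Y3poly, iterDeriv_sum, bernoulliExp_sum]
  split_ifs with h01
  · calc _ = ∑ s ∈ triplesWith G 3,
            if a.support ⊆ edgesIn G.edgeFinset s then q ^ (3 - #a.support) else 0 := by
          refine sum_congr rfl fun s hs => ?_
          simp only [iterDeriv_prod_X, and_iff_right h01]
          split_ifs with hsub
          · rw [bernoulliExp_prod_X, card_sdiff_of_subset hsub, ((mem_triplesWith G).mp hs).2]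
          · exact bernoulliExp_zero q
      _ = _ := by rw [← sum_filter, sum_const, nsmul_eq_mul, trianglesContaining]
  · refine sum_eq_zero fun s _ => ?_
    rw [iterDeriv_prod_X, if_neg fun h => h01 h.1, bernoulliExp_zero]

end Graph

theorem Y3poly_totally_positive_and_bounded_general {V : Type*} [Fintype V] (G : SimpleGraph V)
    (p : ℝ) (hp0 : 0 ≤ p) (hp1 : p ≤ 1)
    (Δ : ℕ) (hΔ : Δ = G.edgeFinset.sup (deltaE G)) :
    TotallyPositive (Y3poly G) ∧
    ∀ a : Sym2 V →₀ ℕ, 1 ≤ ∑ e, a e →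
      bernoulliExp p (iterDeriv a (Y3poly G)) ≤ max 1 (p ^ 2 * (Δ : ℝ)) := by
  refine ⟨totallyPositive_sum _ fun s _ => totallyPositive_prod_X _, fun a ha => ?_⟩
  rw [bernoulliExp_iterDeriv_Y3poly]
  split_ifs
  case neg => exact zero_le_one.trans (le_max_left _ _)
  have hsupp : a.support.Nonempty := by
    refine Finsupp.support_nonempty_iff.mpr ?_
    rintro rfl
    simp at ha
  obtain hone | hmany := (show 1 ≤ #a.support from hsupp.card_pos).eq_or_lt
  · obtain ⟨e, he⟩ := card_eq_one.mp hone.symm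
    have hΔe : (deltaE G e : ℝ) ≤ Δ := by exact_mod_cast hΔ ▸ deltaE_le_sup G e
    rw [he, card_trianglesContaining_singleton, card_singleton, mul_comm]
    exact le_max_of_le_right (by gcongr)
  · calc _ ≤ (1 : ℝ) * 1 := by
          gcongr
          · exact_mod_cast card_trianglesContaining_le_one G hmany
          · exact pow_le_one₀ hp0 hp1
      _ ≤ _ := by simp

theorem Y3poly_totally_positive_and_bounded {V : Type*} [Fintype V] (G : SimpleGraph V)
    (hG : G.edgeFinset.Nonempty) (p : ℝ) (hp0 : 0 ≤ p) (hp1 : p ≤ 1)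
    (Δ : ℕ) (hΔ : Δ = G.edgeFinset.sup (deltaE G)) :
    TotallyPositive (Y3poly G) ∧
    ∀ a : Sym2 V →₀ ℕ, 1 ≤ ∑ e, a e →
      bernoulliExp p (iterDeriv a (Y3poly G)) ≤ max 1 (p ^ 2 * (Δ : ℝ)) :=
  Y3poly_totally_positive_and_bounded_general G p hp0 hp1 Δ hΔ

end ThreeProfile
end
end

section
/- (First edge pivot equation) For every vertex v of G, Σ_{a ∈ Γ(v)} C(c_{v,a}, 2) = 3·F_0(v) + F_1(v), where c_{v,a} = |Γ(v) \ (Γ(a) ∪ {a})| is the number of neighbors of v other than a that are not adjacent to a, and C(·,2) is the binomial coefficient. -/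
open Finset

noncomputable section
open scoped Classical

namespace ThreeProfile

variable {V : Type*}

/-- Ego 3-profile count: 3-subsets of the neighborhood of `v` inducing exactly `i`
edges of `G`. -/
def egoCount [Fintype V] (G : SimpleGraph V) (v : V) (i : ℕ) : ℕ :=
  (((G.neighborFinset v).powersetCard 3).filter
    (fun s => (edgesIn G.edgeFinset s).card = i)).card

/-- `c_{v,a}`: neighbors of `v` other than `a` that are not adjacent to `a`. -/
def cva [Fintype V] (G : SimpleGraph V) (v a : V) : ℕ :=
  (G.neighborFinset v \ insert a (G.neighborFinset a)).card

/-! Both sides count pairs `(a, s)` with `s` a 3-subset of `Γ(v)` and `a ∈ s` adjacent to neither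
other vertex of `s`. Choosing `a` first and then the two other vertices among its `c_{v,a}`
non-neighbours in `Γ(v)` gives the left side; a triple inducing 0, 1 or at least 2 edges contains
3, 1 or 0 such vertices respectively, which gives the right side. -/

section

variable (G : SimpleGraph V) {x y z : V}

lemma sum_choose_card_nonadj_eq_sum_card_isolated (N : Finset V) :
    ∑ a ∈ N, (#{b ∈ N | ¬G.Adj a b} - 1).choose 2
      = ∑ s ∈ N.powersetCard 3, #{a ∈ s | ∀ b ∈ s, ¬G.Adj a b} := by
  have per_vertex : ∀ a ∈ N, (#{b ∈ N | ¬G.Adj a b} - 1).choose 2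
      = #{s ∈ N.powersetCard 3 | a ∈ s ∧ ∀ b ∈ s, ¬G.Adj a b} := by
    intro a ha
    have hsub : {a} ⊆ N.filter (¬G.Adj a ·) := by simp [ha]
    calc (#{b ∈ N | ¬G.Adj a b} - 1).choose 2
        = #{s ∈ (N.filter (¬G.Adj a ·)).powersetCard 3 | {a} ⊆ s} := by
          rw [card_filter_powersetCard_subset _ _ 3 hsub (by simp), card_singleton]
      _ = #{s ∈ N.powersetCard 3 | a ∈ s ∧ ∀ b ∈ s, ¬G.Adj a b} := by
          congr 1
          ext s
          simp only [mem_filter, mem_powersetCard, subset_iff]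
          grind
  rw [sum_congr rfl per_vertex]
  refine (sum_card_bipartiteAbove_eq_sum_card_bipartiteBelow _).trans
    (sum_congr rfl fun s hs => ?_)
  congr 1
  ext a
  have hsN := (mem_powersetCard.1 hs).1
  simp only [bipartiteBelow, mem_filter]
  grind

lemma card_isolated_triple (hxy : x ≠ y) (hxz : x ≠ z) (hyz : y ≠ z) :
    #{a ∈ ({x, y, z} : Finset V) | ∀ b ∈ ({x, y, z} : Finset V), ¬G.Adj a b}
      = (if ¬G.Adj x y ∧ ¬G.Adj x z then 1 else 0)
        + (if ¬G.Adj x y ∧ ¬G.Adj y z then 1 else 0)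
        + (if ¬G.Adj x z ∧ ¬G.Adj y z then 1 else 0) := by
  rw [card_filter, sum_insert (by simp [hxy, hxz]), sum_insert (by simp [hyz]), sum_singleton]
  simp [G.adj_comm y x, G.adj_comm z x, G.adj_comm z y, add_assoc]

variable [Fintype G.edgeSet]

lemma edgesIn_triple :
    edgesIn G.edgeFinset {x, y, z}
      = {e ∈ ({s(x, y), s(x, z), s(y, z)} : Finset (Sym2 V)) | e ∈ G.edgeSet} := by
  ext e
  induction e using Sym2.ind with
  | _ u w =>
    simp only [edgesIn, mem_filter, SimpleGraph.mem_edgeFinset, mem_insert, mem_singleton,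
      Sym2.mem_iff, forall_eq_or_imp, forall_eq, Sym2.eq_iff, SimpleGraph.mem_edgeSet]
    have hne := fun h : G.Adj u w => G.ne_of_adj h
    grind

lemma card_edgesIn_triple (hxy : x ≠ y) (hxz : x ≠ z) (hyz : y ≠ z) :
    #(edgesIn G.edgeFinset {x, y, z})
      = (if G.Adj x y then 1 else 0) + (if G.Adj x z then 1 else 0)
        + (if G.Adj y z then 1 else 0) := by
  rw [edgesIn_triple, card_filter, sum_insert, sum_insert, sum_singleton]
  · simp only [SimpleGraph.mem_edgeSet]; ring
  all_goals simp; grind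

lemma card_isolated_of_card_eq_three {s : Finset V} (hs : #s = 3) :
    #{a ∈ s | ∀ b ∈ s, ¬G.Adj a b}
      = 3 * (if #(edgesIn G.edgeFinset s) = 0 then 1 else 0)
        + (if #(edgesIn G.edgeFinset s) = 1 then 1 else 0) := by
  obtain ⟨x, y, z, hxy, hxz, hyz, rfl⟩ := card_eq_three.1 hs
  rw [card_isolated_triple G hxy hxz hyz, card_edgesIn_triple G hxy hxz hyz]
  by_cases G.Adj x y <;> by_cases G.Adj x z <;> by_cases G.Adj y z <;> simp_all

end

lemma cva_eq_card_nonadj_sub_one [Fintype V] (G : SimpleGraph V) {v a : V} (ha : G.Adj v a) :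
    cva G v a = #{b ∈ G.neighborFinset v | ¬G.Adj a b} - 1 := by
  rw [cva, sdiff_insert, card_erase_of_mem (by simpa using ha)]
  congr 2
  ext b
  simp

theorem first_edge_pivot {V : Type*} [Fintype V] (G : SimpleGraph V) (v : V) :
    ∑ a ∈ G.neighborFinset v, Nat.choose (cva G v a) 2
      = 3 * egoCount G v 0 + egoCount G v 1 := by
  rw [sum_congr rfl fun a ha => by
      rw [cva_eq_card_nonadj_sub_one G ((G.mem_neighborFinset v a).1 ha)],
    sum_choose_card_nonadj_eq_sum_card_isolated,
    sum_congr rfl fun s hs => card_isolated_of_card_eq_three G (mem_powersetCard.1 hs).2,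
    sum_add_distrib, ← mul_sum, egoCount, egoCount, card_filter, card_filter]

end ThreeProfile
end
end

section
/- (Second edge pivot equation) For every vertex v of G, Σ_{a ∈ Γ(v)} C(|Γ(v) ∩ Γ(a)|, 2) = F_2(v) + 3·F_3(v), where C(·,2) is the binomial coefficient. -/
/-!
Both sides count the pairs `(a, {b, c})` with `a, b, c` in `Γ(v)` and `b, c` adjacent to `a`.
Grouped by `a`, this is the left-hand side; grouped by the 3-set `{a, b, c}`, each 3-set
contributes the number of its vertices adjacent to both others, which is `1` when it
spans two edges, `3` when it spans three, and `0` otherwise.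
-/

open Finset

noncomputable section
open scoped Classical

namespace ThreeProfile

variable {V : Type*}

def wedgeCenters (G : SimpleGraph V) (t : Finset V) : Finset V :=
  {a ∈ t | ∀ b ∈ t, b ≠ a → G.Adj a b}

section DoubleCounting

variable (G : SimpleGraph V) [G.LocallyFinite]

lemma notMem_of_subset_neighborFinset {p : Finset V} {a : V} (hp : p ⊆ G.neighborFinset a) :
    a ∉ p :=
  fun h ↦ G.irrefl <| (G.mem_neighborFinset _ _).mp (hp h)

lemma powersetCard_two_inter_neighborFinset_eq_image {s : Finset V} {a : V} (ha : a ∈ s) :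
    (((s ∩ G.neighborFinset a).powersetCard 2).image (insert a))
      = {t ∈ s.powersetCard 3 | a ∈ wedgeCenters G t} := by
  ext t
  simp only [mem_image, mem_filter, mem_powersetCard, wedgeCenters, subset_inter_iff]
  constructor
  · rintro ⟨p, ⟨⟨hps, hpa⟩, hp⟩, rfl⟩
    refine ⟨⟨insert_subset ha hps, ?_⟩, mem_insert_self a p,
      fun b hb hba ↦ (G.mem_neighborFinset _ _).mp (hpa ((mem_insert.mp hb).resolve_left hba))⟩
    rw [card_insert_of_notMem (notMem_of_subset_neighborFinset G hpa), hp]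
  · rintro ⟨⟨hts, ht⟩, hat, hadj⟩
    refine ⟨t.erase a, ⟨⟨(erase_subset a t).trans hts, fun b hb ↦ ?_⟩, ?_⟩, insert_erase hat⟩
    · exact (G.mem_neighborFinset _ _).mpr (hadj b (mem_of_mem_erase hb) (ne_of_mem_erase hb))
    · rw [card_erase_of_mem hat, ht]

theorem sum_choose_card_inter_neighborFinset (s : Finset V) :
    ∑ a ∈ s, (#(s ∩ G.neighborFinset a)).choose 2
      = ∑ t ∈ s.powersetCard 3, #(wedgeCenters G t) := by
  have hinj (a : V) :
      Set.InjOn (insert a : Finset V → Finset V) ((s ∩ G.neighborFinset a).powersetCard 2) := by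
    intro p hp q hq hpq
    have hnot {r : Finset V} (hr : r ∈ (s ∩ G.neighborFinset a).powersetCard 2) : a ∉ r :=
      notMem_of_subset_neighborFinset G <|
        (mem_powersetCard.mp hr).1.trans inter_subset_right
    rw [← erase_insert (hnot hp), hpq, erase_insert (hnot hq)]
  calc ∑ a ∈ s, (#(s ∩ G.neighborFinset a)).choose 2
      = ∑ a ∈ s, #{t ∈ s.powersetCard 3 | a ∈ wedgeCenters G t} := by
        refine sum_congr rfl fun a ha ↦ ?_
        rw [← powersetCard_two_inter_neighborFinset_eq_image G ha, card_image_of_injOn (hinj a),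
          card_powersetCard]
    _ = ∑ t ∈ s.powersetCard 3, #{a ∈ s | a ∈ wedgeCenters G t} :=
        sum_card_bipartiteAbove_eq_sum_card_bipartiteBelow _
    _ = ∑ t ∈ s.powersetCard 3, #(wedgeCenters G t) := by
        refine sum_congr rfl fun t ht ↦ congrArg card (filter_mem_eq_inter.trans ?_)
        exact inter_eq_right.mpr ((filter_subset _ t).trans (mem_powersetCard.mp ht).1)

end DoubleCounting

lemma edgesIn_edgeFinset_triple (G : SimpleGraph V) [Fintype G.edgeSet] (x y z : V) :
    edgesIn G.edgeFinset {x, y, z}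
      = ({s(x, y), s(x, z), s(y, z)} : Finset (Sym2 V)).filter (· ∈ G.edgeFinset) := by
  ext ⟨u, w⟩
  simp only [edgesIn, mem_filter, SimpleGraph.mem_edgeFinset, SimpleGraph.mem_edgeSet,
    Sym2.mem_iff, mem_insert, mem_singleton, Sym2.eq_iff]
  constructor
  · rintro ⟨hadj, h⟩
    refine ⟨?_, hadj⟩
    have := hadj.ne
    rcases h u (.inl rfl) with rfl | rfl | rfl <;> rcases h w (.inr rfl) with rfl | rfl | rfl <;>
      tauto
  · rintro ⟨h, hadj⟩
    exact ⟨hadj, by rintro t (rfl | rfl) <;> tauto⟩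

theorem card_wedgeCenters_of_card_eq_three (G : SimpleGraph V) [Fintype G.edgeSet]
    {t : Finset V} (ht : #t = 3) :
    #(wedgeCenters G t)
      = (if #(edgesIn G.edgeFinset t) = 2 then 1 else 0)
        + 3 * (if #(edgesIn G.edgeFinset t) = 3 then 1 else 0) := by
  obtain ⟨x, y, z, hxy, hxz, hyz, rfl⟩ := card_eq_three.mp ht
  rw [edgesIn_edgeFinset_triple]
  by_cases G.Adj x y <;> by_cases G.Adj x z <;> by_cases G.Adj y z <;>
    simp_all [wedgeCenters, filter_insert, filter_singleton, card_insert_of_notMem,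
      hxy.symm, hxz.symm, hyz.symm, G.adj_comm y x, G.adj_comm z x, G.adj_comm z y]

theorem second_edge_pivot {V : Type*} [Fintype V] (G : SimpleGraph V) (v : V) :
    ∑ a ∈ G.neighborFinset v,
        Nat.choose (G.neighborFinset v ∩ G.neighborFinset a).card 2
      = egoCount G v 2 + 3 * egoCount G v 3 := by
  rw [sum_choose_card_inter_neighborFinset, egoCount, egoCount, card_filter, card_filter,
    mul_sum, ← sum_add_distrib]
  exact sum_congr rfl fun t ht ↦
    card_wedgeCenters_of_card_eq_three G (mem_powersetCard.mp ht).2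

end ThreeProfile
end
end
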